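/- arXiv:1901.10717 — 8 statements merged into one kernel-verified Lean document; each statement's English description precedes it below -/
import Mathlib

section
/- Let C be a well-powered category with small coproducts, wide pullbacks, and strong epi–mono factorizations (so each Subobject lattice is a complete lattice), and let F : C ⥤ C preserve monomorphisms and intersections. Given an I-pointed F-coalgebra (C, c : C ⟶ F.obj C, i_C : I ⟶ C), let m₀ be the image subobject of i_C and let R = ⨆_{k ∈ ℕ} ⬗_c^[k] m₀ in Subobject C (the supremum of all iterated applications of the previous-time operator of c to m₀). Then there exist morphisms r : (R : C) ⟶ F.obj (R : C) and i_R : I ⟶ (R : C) such that R.arrow is a homomorphism of I-pointed coalgebras from (R, r, i_R) to (C, c, i_C), and the I-pointed coalgebra (R, r, i_R) is reachable. -/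
/-!
If `F` preserves intersections, `prevTime F c` is left adjoint to `nextTime hF c`, and a subobject
`M` of `X` carries a subcoalgebra structure exactly when `prevTime F c M ≤ M`. The supremum `R`
of the iterates of `prevTime F c` on the image of the point is then the least such prefixed point
above that image: it is a prefixed point because the left adjoint `prevTime F c` sends it below the
supremum of the shifted iterates, and every pointed subcoalgebra of `R`, seen as a subobject of
`X`, is a prefixed point above the image, hence contains `R`.
-/

open CategoryTheory CategoryTheory.Limits

universe w v u

variable {C : Type u} [Category.{v} C]

/-- A functor preserves monomorphisms. -/
def PreservesMonos (F : C ⥤ C) : Prop :=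
  ∀ ⦃X Y : C⦄ (f : X ⟶ Y), Mono f → Mono (F.map f)

/-- The induced map on subobject lattices of a mono-preserving functor. -/
noncomputable def subMap {F : C ⥤ C} (hF : PreservesMonos F) {Y : C} (m : Subobject Y) :
    Subobject (F.obj Y) :=
  letI : Mono (F.map m.arrow) := hF m.arrow inferInstance
  Subobject.mk (F.map m.arrow)

/-- A mono-preserving functor preserves intersections if the induced maps on subobject
lattices preserve arbitrary infima. -/
def PreservesIntersections [WellPowered.{v} C] [HasWidePullbacks.{v} C] {F : C ⥤ C}
    (hF : PreservesMonos F) : Prop :=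
  ∀ ⦃Y : C⦄ (s : Set (Subobject Y)), subMap hF (sInf s) = sInf (subMap hF '' s)

/-- The "next time" operator of a morphism `f : X ⟶ F.obj Y`. -/
noncomputable def nextTime [HasPullbacks C] {F : C ⥤ C} (hF : PreservesMonos F)
    {X Y : C} (f : X ⟶ F.obj Y) (n : Subobject Y) : Subobject X :=
  (Subobject.pullback f).obj (subMap hF n)

/-- The "previous time" operator of a morphism `f : X ⟶ F.obj Y`: it sends a subobject `m` of
`X` to the least subobject `n` of `Y` such that `m.arrow ≫ f` factors through `F.map n.arrow`. -/
noncomputable def prevTime [WellPowered.{v} C] [HasWidePullbacks.{v} C] (F : C ⥤ C)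
    {X Y : C} (f : X ⟶ F.obj Y) (m : Subobject X) : Subobject Y :=
  sInf {n : Subobject Y | ∃ g : (m : C) ⟶ F.obj (n : C), g ≫ F.map n.arrow = m.arrow ≫ f}

/-- An `I`-pointed coalgebra `(X, c, i)` is reachable if every monomorphic homomorphism of
`I`-pointed coalgebras into it is an isomorphism. -/
def Reachable (F : C ⥤ C) {I X : C} (c : X ⟶ F.obj X) (i : I ⟶ X) : Prop :=
  ∀ ⦃S : C⦄ (s : S ⟶ F.obj S) (iS : I ⟶ S) (m : S ⟶ X),
    Mono m → s ≫ F.map m = m ≫ c → iS ≫ m = i → IsIso m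

lemma Monotone.iSup_iterate_le_of_map_le {α : Type*} [CompleteSemilatticeSup α] {f : α → α}
    (hf : Monotone f) {a b : α} (hab : a ≤ b) (hb : f b ≤ b) : ⨆ k : ℕ, f^[k] a ≤ b :=
  sSup_le <| Set.forall_mem_range.2 fun k =>
    (hf.iterate k hab).trans (hf.antitone_iterate_of_map_le hb (Nat.zero_le k))

lemma GaloisConnection.l_iSup_iterate_le {α : Type*} [CompleteSemilatticeSup α]
    {l u : α → α} (gc : GaloisConnection l u) (a : α) :
    l (⨆ k : ℕ, l^[k] a) ≤ ⨆ k : ℕ, l^[k] a := by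
  rw [gc.le_iff_le]
  refine sSup_le (Set.forall_mem_range.2 fun k => ?_)
  rw [← gc.le_iff_le, ← Function.iterate_succ_apply' l]
  exact le_sSup (Set.mem_range_self _)

namespace CategoryTheory.Subobject

lemma factors_iff_imageSubobject_le [HasImages C] {A B : C} (f : A ⟶ B)
    (P : Subobject B) : P.Factors f ↔ imageSubobject f ≤ P :=
  ⟨fun h => imageSubobject_le f _ (P.factorThru_arrow f h), fun h => by
    simpa using factors_of_le _ h (factors_comp_arrow (factorThruImageSubobject f))⟩

lemma isIso_of_le_mk_comp_arrow {X S : C} {N : Subobject X} (m : S ⟶ N) [Mono m]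
    (h : N ≤ mk (m ≫ N.arrow)) : IsIso m := by
  have hu : ofLEMk N _ h ≫ m ≫ N.arrow = N.arrow := ofLEMk_comp h
  refine ⟨⟨ofLEMk N _ h, ?_, ?_⟩⟩
  · rw [← cancel_mono (m ≫ N.arrow), Category.id_comp, Category.assoc, hu]
  · rw [← cancel_mono N.arrow, Category.assoc, hu, Category.id_comp]

end CategoryTheory.Subobject

section

variable {F : C ⥤ C} (hF : PreservesMonos F)

lemma subMap_factors_iff {Y A : C} (n : Subobject Y) (f : A ⟶ F.obj Y) :
    (subMap hF n).Factors f ↔ ∃ g : A ⟶ F.obj n, g ≫ F.map n.arrow = f :=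
  Iff.rfl

lemma subMap_monotone {Y : C} : Monotone (subMap hF (Y := Y)) := fun n n' h =>
  letI := hF n.arrow inferInstance
  letI := hF n'.arrow inferInstance
  Subobject.mk_le_mk_of_comm (F.map (Subobject.ofLE n n' h)) (by
    rw [← F.map_comp, Subobject.ofLE_arrow])

variable [HasPullbacks C]

lemma nextTime_monotone {X Y : C} (f : X ⟶ F.obj Y) : Monotone (nextTime hF f) :=
  fun _ _ h => (Subobject.pullback f).monotone (subMap_monotone hF h)

lemma le_nextTime_iff {X Y : C} (f : X ⟶ F.obj Y) (m : Subobject X) (n : Subobject Y) :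
    m ≤ nextTime hF f n ↔ ∃ g : (m : C) ⟶ F.obj n, g ≫ F.map n.arrow = m.arrow ≫ f := by
  rw [← subMap_factors_iff hF, ← pullback_factors_iff]
  exact ⟨fun h => Subobject.factors_of_le _ h m.factors_self, Subobject.le_of_factors⟩

end

section

variable [WellPowered.{v} C] [HasWidePullbacks.{v} C] {F : C ⥤ C} {hF : PreservesMonos F}

lemma prevTime_mk_le_of_comm {X S : C} (c : X ⟶ F.obj X) (m : S ⟶ X) [Mono m]
    (s : S ⟶ F.obj S) (h : s ≫ F.map m = m ≫ c) :
    prevTime F c (Subobject.mk m) ≤ Subobject.mk m := by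
  refine Subobject.sInf_le.{v} _ _ ⟨(Subobject.underlyingIso m).hom ≫ s ≫
    F.map (Subobject.underlyingIso m).inv, ?_⟩
  rw [Category.assoc, Category.assoc, ← F.map_comp, Subobject.underlyingIso_arrow, h,
    ← Category.assoc, Subobject.underlyingIso_hom_comp_eq_mk]

lemma prevTime_le_of_le_nextTime {X Y : C} (f : X ⟶ F.obj Y) {m : Subobject X}
    {n : Subobject Y} (h : m ≤ nextTime hF f n) : prevTime F f m ≤ n :=
  Subobject.sInf_le.{v} _ _ ((le_nextTime_iff hF f m n).1 h)

variable [HasImages C]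

-- `F` has least bounds: `prevTime F f m` is itself a bound for `m.arrow ≫ f`.
lemma le_nextTime_prevTime (hInt : PreservesIntersections hF) {X Y : C} (f : X ⟶ F.obj Y)
    (m : Subobject X) : m ≤ nextTime hF f (prevTime F f m) := by
  refine Subobject.le_of_factors ((pullback_factors_iff f _ _).2 ?_)
  rw [prevTime, hInt, Subobject.factors_iff_imageSubobject_le]
  refine Subobject.le_sInf.{v} _ _ ?_
  rintro _ ⟨n, hn, rfl⟩
  exact (Subobject.factors_iff_imageSubobject_le _ _).1 ((subMap_factors_iff hF n _).2 hn)

lemma gc_prevTime_nextTime (hInt : PreservesIntersections hF) {X Y : C} (f : X ⟶ F.obj Y) :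
    GaloisConnection (prevTime F f) (nextTime hF f) := fun _ _ =>
  ⟨fun h => (le_nextTime_prevTime hInt f _).trans (nextTime_monotone hF f h),
    prevTime_le_of_le_nextTime f⟩

end

/-- **Iterative construction of the reachable part.**
Let `C` be a well-powered category with small coproducts, wide pullbacks and strong
epi–mono factorizations, and let `F` preserve monomorphisms and intersections.  Given an
`I`-pointed `F`-coalgebra `(X, c, i_C)`, let `m₀` be the image subobject of `i_C` and let
`R = ⨆ k, (prevTime F c)^[k] m₀`.  Then `R` carries an `I`-pointed coalgebra structure
`(r, i_R)` such that `R.arrow` is a homomorphism of `I`-pointed coalgebras into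
`(X, c, i_C)` and `(R, r, i_R)` is reachable. -/
theorem reachable_part_iterative_construction
    [WellPowered.{v} C] [HasWidePullbacks.{v} C] [HasCoproducts.{v} C]
    [HasStrongEpiMonoFactorisations C]
    (F : C ⥤ C) (hF : PreservesMonos F) (hInt : PreservesIntersections hF)
    {I X : C} (c : X ⟶ F.obj X) (i_C : I ⟶ X)
    (R : Subobject X) (hR : R = ⨆ k : ℕ, (prevTime F c)^[k] (imageSubobject i_C)) :
    ∃ (r : (R : C) ⟶ F.obj (R : C)) (i_R : I ⟶ (R : C)),
      r ≫ F.map R.arrow = R.arrow ≫ c ∧ i_R ≫ R.arrow = i_C ∧ Reachable F r i_R := by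
  -- instance search cannot infer the universe of Mathlib's suprema of subobjects
  let _ : CompleteSemilatticeSup (Subobject X) := Subobject.completeSemilatticeSup.{v}
  have gc := gc_prevTime_nextTime hInt c
  have hR₀ : imageSubobject i_C ≤ R := by rw [hR]; exact le_sSup ⟨0, rfl⟩
  have hRc : prevTime F c R ≤ R := by rw [hR]; exact gc.l_iSup_iterate_le _
  obtain ⟨r, hr⟩ := (le_nextTime_iff hF c R R).1 (gc.le_iff_le.1 hRc)
  refine ⟨r, factorThruImageSubobject i_C ≫ Subobject.ofLE _ _ hR₀, hr, by simp, ?_⟩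
  intro S s iS m _ hs hiS
  refine Subobject.isIso_of_le_mk_comp_arrow m
    (hR.le.trans (gc.monotone_l.iSup_iterate_le_of_map_le ?_ ?_))
  · exact imageSubobject_le_mk _ _ iS (by simp [reassoc_of% hiS])
  · exact prevTime_mk_le_of_comm c _ s (by rw [F.map_comp, reassoc_of% hs, hr, Category.assoc])
end

section
/- Let C be a well-powered category with small coproducts, wide pullbacks, and strong epi–mono factorizations, and let F : C ⥤ C preserve monomorphisms, intersections, and inverse images (pullbacks along monomorphisms). Let m : (R, r, i_R) ↪ (C, c, i_C) be a reachable pointed subcoalgebra of an I-pointed F-coalgebra (C, c, i_C) (i.e., m is a monomorphic homomorphism of I-pointed coalgebras and (R, r, i_R) is reachable). Then every homomorphism h : (S, s, i_S) → (C, c, i_C) of I-pointed coalgebras with (S, s, i_S) reachable factors uniquely through m via a homomorphism of I-pointed coalgebras; hence the reachable I-pointed coalgebras form a coreflective full subcategory of the category of I-pointed F-coalgebras. -/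
open CategoryTheory CategoryTheory.Limits

universe w v u

variable {C : Type u} [Category.{v} C]

/-- A functor preserves inverse images if it preserves pullback squares in which (at least)
one of the two morphisms being pulled back is a monomorphism. -/
def PreservesInverseImages (F : C ⥤ C) : Prop :=
  ∀ ⦃P X Y Z : C⦄ (fst : P ⟶ X) (snd : P ⟶ Y) (f : X ⟶ Z) (g : Y ⟶ Z), Mono g →
    IsPullback fst snd f g → IsPullback (F.map fst) (F.map snd) (F.map f) (F.map g)

section CoalgebraHom

variable {F : C ⥤ C}

lemma coalgebra_hom_comp {X Y Z : C} {x : X ⟶ F.obj X} {y : Y ⟶ F.obj Y} {z : Z ⟶ F.obj Z}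
    {f : X ⟶ Y} {g : Y ⟶ Z} (hf : x ≫ F.map f = f ≫ y) (hg : y ≫ F.map g = g ≫ z) :
    x ≫ F.map (f ≫ g) = (f ≫ g) ≫ z := by
  rw [F.map_comp, reassoc_of% hf, hg, Category.assoc]

lemma coalgebra_hom_inv {X Y : C} {x : X ⟶ F.obj X} {y : Y ⟶ F.obj Y} (f : X ⟶ Y) [IsIso f]
    (hf : x ≫ F.map f = f ≫ y) : y ≫ F.map (inv f) = inv f ≫ x := by
  rw [IsIso.eq_inv_comp, ← reassoc_of% hf, ← F.map_comp, IsIso.hom_inv_id, F.map_id,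
    Category.comp_id]

lemma PreservesInverseImages.exists_str_of_isPullback (hInv : PreservesInverseImages F)
    {P X Y Z : C} {fst : P ⟶ X} {snd : P ⟶ Y} {f : X ⟶ Z} {g : Y ⟶ Z} [Mono g]
    (sq : IsPullback fst snd f g) {x : X ⟶ F.obj X} {y : Y ⟶ F.obj Y} {z : Z ⟶ F.obj Z}
    (hf : x ≫ F.map f = f ≫ z) (hg : y ≫ F.map g = g ≫ z) :
    ∃ p : P ⟶ F.obj P, p ≫ F.map fst = fst ≫ x ∧ p ≫ F.map snd = snd ≫ y := by
  have hFsq := hInv fst snd f g inferInstance sq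
  have w : (fst ≫ x) ≫ F.map f = (snd ≫ y) ≫ F.map g := by
    rw [Category.assoc, hf, Category.assoc, hg, sq.w_assoc]
  exact ⟨hFsq.lift _ _ w, hFsq.lift_fst _ _ w, hFsq.lift_snd _ _ w⟩

/-- The pullback of `m` along `h` is a pointed subcoalgebra of the reachable `S`, hence all of
it. -/
lemma Reachable.exists_lift_of_mono [HasPullbacks C] (hInv : PreservesInverseImages F) {I X R S : C} {c : X ⟶ F.obj X} {i_C : I ⟶ X}
    {r : R ⟶ F.obj R} {i_R : I ⟶ R} (m : R ⟶ X) [Mono m]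
    (hm_coalg : r ≫ F.map m = m ≫ c) (hm_pt : i_R ≫ m = i_C)
    {s : S ⟶ F.obj S} {i_S : I ⟶ S} (h : S ⟶ X)
    (hh_coalg : s ≫ F.map h = h ≫ c) (hh_pt : i_S ≫ h = i_C)
    (hS_reach : Reachable F s i_S) :
    ∃ k : S ⟶ R, (s ≫ F.map k = k ≫ r ∧ i_S ≫ k = i_R) ∧ k ≫ m = h := by
  obtain ⟨p, hp_fst, hp_snd⟩ :=
    hInv.exists_str_of_isPullback (IsPullback.of_hasPullback h m) hh_coalg hm_coalg
  let i_P : I ⟶ pullback h m := pullback.lift i_S i_R (hh_pt.trans hm_pt.symm)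
  have hiP_fst : i_P ≫ pullback.fst h m = i_S := pullback.lift_fst _ _ _
  have : IsIso (pullback.fst h m) := hS_reach p i_P _ inferInstance hp_fst hiP_fst
  refine ⟨inv (pullback.fst h m) ≫ pullback.snd h m,
    ⟨coalgebra_hom_comp (coalgebra_hom_inv _ hp_fst) hp_snd, ?_⟩, ?_⟩
  · rw [← hiP_fst, Category.assoc, IsIso.hom_inv_id_assoc]
    exact pullback.lift_snd _ _ _
  · rw [Category.assoc, ← pullback.condition, IsIso.inv_hom_id_assoc]

end CoalgebraHom

theorem reachable_part_coreflection_general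
    [HasWidePullbacks.{v} C]
    (F : C ⥤ C)
    (hInv : PreservesInverseImages F)
    {I X R S : C} (c : X ⟶ F.obj X) (i_C : I ⟶ X)
    (r : R ⟶ F.obj R) (i_R : I ⟶ R) (m : R ⟶ X) (hm : Mono m)
    (hm_coalg : r ≫ F.map m = m ≫ c) (hm_pt : i_R ≫ m = i_C)
    (s : S ⟶ F.obj S) (i_S : I ⟶ S) (h : S ⟶ X)
    (hh_coalg : s ≫ F.map h = h ≫ c) (hh_pt : i_S ≫ h = i_C)
    (hS_reach : Reachable F s i_S) :
    ∃! k : S ⟶ R, (s ≫ F.map k = k ≫ r ∧ i_S ≫ k = i_R) ∧ k ≫ m = h := by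
  obtain ⟨k, hk_hom, hk⟩ :=
    hS_reach.exists_lift_of_mono hInv m hm_coalg hm_pt h hh_coalg hh_pt
  exact ⟨k, ⟨hk_hom, hk⟩, fun k' ⟨_, hk'⟩ => (cancel_mono m).mp (hk'.trans hk.symm)⟩

/-- **The reachable part is a coreflection.**  If `F` preserves monomorphisms, intersections
and inverse images, `m : (R, r, i_R) ↪ (X, c, i_C)` is a reachable pointed subcoalgebra, and
`h : (S, s, i_S) → (X, c, i_C)` is a homomorphism of `I`-pointed coalgebras with `(S, s, i_S)`
reachable, then `h` factors uniquely through `m` via a homomorphism of `I`-pointed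
coalgebras; hence reachable `I`-pointed coalgebras form a coreflective full subcategory. -/
theorem reachable_part_coreflection
    [WellPowered.{v} C] [HasWidePullbacks.{v} C] [HasCoproducts.{v} C]
    [HasStrongEpiMonoFactorisations C]
    (F : C ⥤ C) (hF : PreservesMonos F) (hInt : PreservesIntersections hF)
    (hInv : PreservesInverseImages F)
    {I X R S : C} (c : X ⟶ F.obj X) (i_C : I ⟶ X)
    (r : R ⟶ F.obj R) (i_R : I ⟶ R) (m : R ⟶ X) (hm : Mono m)
    (hm_coalg : r ≫ F.map m = m ≫ c) (hm_pt : i_R ≫ m = i_C)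
    (hR_reach : Reachable F r i_R)
    (s : S ⟶ F.obj S) (i_S : I ⟶ S) (h : S ⟶ X)
    (hh_coalg : s ≫ F.map h = h ≫ c) (hh_pt : i_S ≫ h = i_C)
    (hS_reach : Reachable F s i_S) :
    ∃! k : S ⟶ R, (s ≫ F.map k = k ≫ r ∧ i_S ≫ k = i_R) ∧ k ≫ m = h :=
  reachable_part_coreflection_general F hInv c i_C r i_R m hm hm_coalg hm_pt s i_S h hh_coalg hh_pt
    hS_reach
end

section
/- Let C be a well-powered category with small coproducts, wide pullbacks, and strong epi–mono factorizations, and let F : C ⥤ C preserve monomorphisms, intersections, and inverse images (pullbacks along monomorphisms). If (R, r, i_R) is a reachable I-pointed F-coalgebra and e : (R, r, i_R) → (Q, q, i_Q) is a homomorphism of I-pointed coalgebras whose underlying morphism is a strong epimorphism, then (Q, q, i_Q) is reachable. In other words, reachable I-pointed F-coalgebras are closed under quotients. -/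
/-!
Pull a pointed subcoalgebra `m : S ↣ Q` back along the quotient `e : R ⟶ Q`. Since `F` preserves
inverse images, the pullback carries a coalgebra structure making its projection to `R` a
pointed subcoalgebra, which is all of `R` by reachability. Hence `e` factors through `m`, and a
monomorphism through which a strong epimorphism factors is an isomorphism.
-/

open CategoryTheory CategoryTheory.Limits

universe w v u

variable {C : Type u} [Category.{v} C]

theorem isIso_of_mono_of_fac_strongEpi {X Y Z : C} (g : X ⟶ Y) (m : Y ⟶ Z) [Mono m]
    {e : X ⟶ Z} [StrongEpi e] (fac : g ≫ m = e) : IsIso m := by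
  have : StrongEpi (g ≫ m) := fac ▸ ‹StrongEpi e›
  have : StrongEpi m := strongEpi_of_strongEpi g m
  exact isIso_of_mono_of_strongEpi m

theorem PreservesInverseImages.exists_coalgebra_of_isPullback {F : C ⥤ C}
    (hInv : PreservesInverseImages F) {P R S Q : C} {fst : P ⟶ R} {snd : P ⟶ S} {e : R ⟶ Q}
    {m : S ⟶ Q} [Mono m] (hpb : IsPullback fst snd e m) {r : R ⟶ F.obj R} {s : S ⟶ F.obj S}
    {q : Q ⟶ F.obj Q} (he : r ≫ F.map e = e ≫ q) (hm : s ≫ F.map m = m ≫ q) :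
    ∃ p : P ⟶ F.obj P, p ≫ F.map fst = fst ≫ r ∧ p ≫ F.map snd = snd ≫ s := by
  have hFpb := hInv fst snd e m inferInstance hpb
  have w : (fst ≫ r) ≫ F.map e = (snd ≫ s) ≫ F.map m := by
    simp only [Category.assoc, he, hm, hpb.w_assoc]
  exact ⟨hFpb.lift _ _ w, hFpb.lift_fst _ _ w, hFpb.lift_snd _ _ w⟩

theorem reachable_closed_under_quotients_general
    [HasWidePullbacks.{v} C]
    (F : C ⥤ C)
    (hInv : PreservesInverseImages F)
    {I R Q : C} (r : R ⟶ F.obj R) (i_R : I ⟶ R)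
    (q : Q ⟶ F.obj Q) (i_Q : I ⟶ Q)
    (hR_reach : Reachable F r i_R)
    (e : R ⟶ Q) (he : StrongEpi e)
    (he_coalg : r ≫ F.map e = e ≫ q) (he_pt : i_R ≫ e = i_Q) :
    Reachable F q i_Q := by
  intro S s i_S m hm hm_coalg hm_pt
  have : HasPullbacks C := hasPullbacks_of_hasWidePullbacks C
  obtain ⟨p, hp, -⟩ := hInv.exists_coalgebra_of_isPullback (IsPullback.of_hasPullback e m)
    he_coalg hm_coalg
  have : IsIso (pullback.fst e m) :=
    hR_reach p (pullback.lift i_R i_S (he_pt.trans hm_pt.symm)) _ pullback.fst_of_mono hp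
      (pullback.lift_fst _ _ _)
  exact isIso_of_mono_of_fac_strongEpi (inv (pullback.fst e m) ≫ pullback.snd e m) m
    (by rw [Category.assoc, ← pullback.condition, IsIso.inv_hom_id_assoc])

/-- **Reachable coalgebras are closed under quotients.**  If `F` preserves monomorphisms,
intersections and inverse images, `(R, r, i_R)` is a reachable `I`-pointed `F`-coalgebra and
`e : (R, r, i_R) → (Q, q, i_Q)` is a homomorphism of `I`-pointed coalgebras whose underlying
morphism is a strong epimorphism, then `(Q, q, i_Q)` is reachable. -/
theorem reachable_closed_under_quotients
    [WellPowered.{v} C] [HasWidePullbacks.{v} C] [HasCoproducts.{v} C]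
    [HasStrongEpiMonoFactorisations C]
    (F : C ⥤ C) (hF : PreservesMonos F) (hInt : PreservesIntersections hF)
    (hInv : PreservesInverseImages F)
    {I R Q : C} (r : R ⟶ F.obj R) (i_R : I ⟶ R)
    (q : Q ⟶ F.obj Q) (i_Q : I ⟶ Q)
    (hR_reach : Reachable F r i_R)
    (e : R ⟶ Q) (he : StrongEpi e)
    (he_coalg : r ≫ F.map e = e ≫ q) (he_pt : i_R ≫ e = i_Q) :
    Reachable F q i_Q :=
  reachable_closed_under_quotients_general F hInv r i_R q i_Q hR_reach e he he_coalg he_pt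
end

section
/- Let F : Type u ⥤ Type u be a functor such that τ is sub-cartesian, i.e., for every injective map m : X → Y: F.map m is injective, τ_Y (F.map m t) = m '' (τ_X t) for all t : F.obj X, and every t' : F.obj Y with τ_Y t' ⊆ Set.range m lies in the range of F.map m. Then F preserves intersections: for every set X and every family of subsets (A_i) of X, the image of F.map applied to the inclusion (⋂ i, A_i) ↪ X equals the intersection of the images of F.map applied to the inclusions A_i ↪ X. -/
open CategoryTheory

universe w u

/-- For a set functor `F`, `tau F t` is the set of elements of `X` that "occur" in
`t : F.obj X`: those `x` such that `t` does not factorize through the inclusion of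
`X \ {x}`. -/
def tau (F : Type u ⥤ Type u) {X : Type u} (t : F.obj X) : Set X :=
  {x : X | ¬ ∃ s : F.obj {y : X // y ≠ x}, F.map (TypeCat.ofHom (Subtype.val : {y : X // y ≠ x} → X)) s = t}

/-- A set functor preserves intersections: `F.map` of every injective map is injective, and
for every family of subsets `(A i)` of a set `X`, the image of `F.map` applied to the
inclusion of `⋂ i, A i` equals the intersection of the images of `F.map` applied to the
inclusions of the `A i`. -/
def SetPreservesIntersections (F : Type u ⥤ Type u) : Prop :=
  (∀ {X Y : Type u} (m : X → Y), Function.Injective m → Function.Injective (F.map (TypeCat.ofHom m))) ∧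
  ∀ {X : Type u} {ι : Sort w} (A : ι → Set X),
    Set.range (F.map (TypeCat.ofHom (Subtype.val : ↥(⋂ i, A i) → X))) =
      ⋂ i, Set.range (F.map (TypeCat.ofHom (Subtype.val : ↥(A i) → X)))

/-! Sub-cartesianness of `tau` along the inclusion of `B ⊆ X` says that the image of `F.map`
of that inclusion consists exactly of the `t : F.obj X` whose support `tau F t` lies in `B`.
Since `tau F t ⊆ ⋂ i, A i` iff `tau F t ⊆ A i` for every `i`, intersections are preserved. -/

theorem range_map_eq_setOf_tau_subset {F : Type u ⥤ Type u} {X Y : Type u} {m : X → Y}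
    (hτ : ∀ t : F.obj X, tau F (F.map (TypeCat.ofHom m) t) = m '' tau F t)
    (hlift : ∀ t' : F.obj Y, tau F t' ⊆ Set.range m →
      ∃ t : F.obj X, F.map (TypeCat.ofHom m) t = t') :
    Set.range (F.map (TypeCat.ofHom m)) = {t' | tau F t' ⊆ Set.range m} := by
  ext t'
  constructor
  · rintro ⟨t, rfl⟩
    rw [Set.mem_ofPred_eq, hτ]
    exact Set.image_subset_range m _
  · exact hlift t'

/-- **Gumm (converse):** if `tau` is a sub-cartesian transformation for `F`, then `F`
preserves intersections. -/
theorem preservesIntersections_of_tau_subCartesian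
    (F : Type u ⥤ Type u)
    (h1 : ∀ {X Y : Type u} (m : X → Y), Function.Injective m →
      Function.Injective (F.map (TypeCat.ofHom m)))
    (h2 : ∀ {X Y : Type u} (m : X → Y), Function.Injective m →
      ∀ t : F.obj X, tau F (F.map (TypeCat.ofHom m) t) = m '' tau F t)
    (h3 : ∀ {X Y : Type u} (m : X → Y), Function.Injective m →
      ∀ t' : F.obj Y, tau F t' ⊆ Set.range m → ∃ t : F.obj X, F.map (TypeCat.ofHom m) t = t') :
    SetPreservesIntersections.{w} F := by
  refine ⟨h1, fun {X} _ A => ?_⟩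
  have range_eq (B : Set X) :
      Set.range (F.map (TypeCat.ofHom (Subtype.val : B → X))) = {t | tau F t ⊆ B} := by
    simpa only [Subtype.range_val] using
      range_map_eq_setOf_tau_subset (m := (Subtype.val : B → X))
        (h2 _ Subtype.val_injective) (h3 _ Subtype.val_injective)
  simp only [range_eq]
  ext t
  simp only [Set.mem_ofPred_eq, Set.mem_iInter, Set.subset_iInter_iff]
end

section
/- Let F : Type u ⥤ Type u be finitary (preserve filtered colimits) and preserve finite intersections (for any two subsets A, B ⊆ X, the image of F.map applied to the inclusion (A ∩ B) ↪ X equals the intersection of the images of F.map applied to the inclusions A ↪ X and B ↪ X, and F.map of every injection is injective). Then F preserves arbitrary intersections: for every set X and every family of subsets (A_i)_{i : ι} of X, the image of F.map applied to the inclusion (⋂ i, A_i) ↪ X equals the intersection over i of the images of F.map applied to the inclusions A_i ↪ X. -/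
/-!
An element `t ∈ F X` lying in the image of `F A_i` for every `i` already lies in the image
of `F M` for a finite `M ⊆ X`, because `X` is the filtered colimit of its finite subsets.
Hence `t` lies in the image of every `F (M ∩ A_i)`; these are only finitely many subsets, so
preservation of finite intersections puts `t` in the image of `F (⋂ i, M ∩ A_i) ⊆ F (⋂ i, A_i)`.
-/

open CategoryTheory CategoryTheory.Limits

universe w u

namespace CategoryTheory.Functor

variable (F : Type u ⥤ Type u) {X : Type u}

def rangeMapVal (A : Set X) : Set (F.obj X) :=
  Set.range (F.map (TypeCat.ofHom (Subtype.val : A → X)))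

theorem rangeMapVal_mono {A B : Set X} (h : A ⊆ B) : F.rangeMapVal A ⊆ F.rangeMapVal B := by
  rintro _ ⟨s, rfl⟩
  exact ⟨F.map (TypeCat.ofHom (Set.inclusion h)) s, (F.map_comp_apply _ _ s).symm⟩

theorem rangeMapVal_univ : F.rangeMapVal (Set.univ : Set X) = Set.univ := by
  refine Set.eq_univ_of_forall fun t => ⟨F.map (TypeCat.ofHom fun x => ⟨x, trivial⟩) t, ?_⟩
  rw [← F.map_comp_apply]
  exact F.map_id_apply _ t

theorem exists_finite_mem_rangeMapVal [PreservesFilteredColimits F] (t : F.obj X) :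
    ∃ M : Set X, M.Finite ∧ t ∈ F.rangeMapVal M := by
  have := HasCardinalLT.Set.isFiltered_of_aleph0_le X Cardinal.aleph0 le_rfl
  obtain ⟨⟨M, hM⟩, s, hs⟩ := Types.jointly_surjective_of_isColimit
    (isColimitOfPreserves F (HasCardinalLT.Set.isColimitCocone X Cardinal.aleph0 le_rfl)) t
  exact ⟨M, Set.finite_coe_iff.mp ((hasCardinalLT_aleph0_iff _).mp hM), s, hs⟩

theorem rangeMapVal_sInter_of_finite
    (hfin : ∀ A B : Set X, F.rangeMapVal (A ∩ B) = F.rangeMapVal A ∩ F.rangeMapVal B)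
    {S : Set (Set X)} (hS : S.Finite) :
    F.rangeMapVal (⋂₀ S) = ⋂ B ∈ S, F.rangeMapVal B := by
  induction S, hS using Set.Finite.induction_on with
  | empty => simp only [Set.sInter_empty, rangeMapVal_univ, Set.biInter_empty]
  | insert _ _ ih => rw [Set.sInter_insert, hfin, ih, Set.biInter_insert]

end CategoryTheory.Functor

theorem preservesIntersections_of_finitary_of_preservesFiniteIntersections_general
    (F : Type u ⥤ Type u) [PreservesFilteredColimits F]
    (hfin : ∀ {X : Type u} (A B : Set X),
      Set.range (F.map (TypeCat.ofHom (Subtype.val : ↥(A ∩ B) → X))) =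
        Set.range (F.map (TypeCat.ofHom (Subtype.val : ↥A → X))) ∩
          Set.range (F.map (TypeCat.ofHom (Subtype.val : ↥B → X)))) :
    ∀ {X : Type u} {ι : Sort w} (A : ι → Set X),
      Set.range (F.map (TypeCat.ofHom (Subtype.val : ↥(⋂ i, A i) → X))) =
        ⋂ i, Set.range (F.map (TypeCat.ofHom (Subtype.val : ↥(A i) → X))) := by
  replace hfin : ∀ {X : Type u} (A B : Set X),
      F.rangeMapVal (A ∩ B) = F.rangeMapVal A ∩ F.rangeMapVal B := hfin
  intro X ι A
  change F.rangeMapVal (⋂ i, A i) = ⋂ i, F.rangeMapVal (A i)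
  refine subset_antisymm
    (Set.subset_iInter fun i => F.rangeMapVal_mono (Set.iInter_subset A i)) fun t ht => ?_
  obtain ⟨M, hM, htM⟩ := F.exists_finite_mem_rangeMapVal t
  set S := Set.range fun i => M ∩ A i
  have hS : S.Finite :=
    hM.finite_subsets.subset (Set.range_subset_iff.mpr fun _ => Set.inter_subset_left)
  have htS : t ∈ F.rangeMapVal (⋂₀ S) := by
    rw [F.rangeMapVal_sInter_of_finite hfin hS, Set.biInter_range]
    exact Set.mem_iInter.mpr fun i => hfin M (A i) ▸ ⟨htM, Set.mem_iInter.mp ht i⟩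
  refine F.rangeMapVal_mono (Set.subset_iInter fun i => ?_) htS
  exact (Set.sInter_subset_of_mem (Set.mem_range_self i)).trans Set.inter_subset_right

/-- **Finitary set functors preserving finite intersections preserve all intersections.**
If `F : Type u ⥤ Type u` preserves filtered colimits, `F.map` of every injection is
injective, and `F` preserves binary intersections of subsets, then `F` preserves arbitrary
intersections of subsets. -/
theorem preservesIntersections_of_finitary_of_preservesFiniteIntersections
    (F : Type u ⥤ Type u) [PreservesFilteredColimits F]
    (hmono : ∀ {X Y : Type u} (m : X → Y), Function.Injective m →
      Function.Injective (F.map (TypeCat.ofHom m)))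
    (hfin : ∀ {X : Type u} (A B : Set X),
      Set.range (F.map (TypeCat.ofHom (Subtype.val : ↥(A ∩ B) → X))) =
        Set.range (F.map (TypeCat.ofHom (Subtype.val : ↥A → X))) ∩
          Set.range (F.map (TypeCat.ofHom (Subtype.val : ↥B → X)))) :
    ∀ {X : Type u} {ι : Sort w} (A : ι → Set X),
      Set.range (F.map (TypeCat.ofHom (Subtype.val : ↥(⋂ i, A i) → X))) =
        ⋂ i, Set.range (F.map (TypeCat.ofHom (Subtype.val : ↥(A i) → X))) :=
  preservesIntersections_of_finitary_of_preservesFiniteIntersections_general F hfin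
end

section
/- (Trnková) For every functor F : Type u ⥤ Type u there exists a functor F̄ : Type u ⥤ Type u that preserves finite intersections (F̄.map of every injection is injective and F̄ preserves pullbacks of pairs of injective maps) and agrees with F away from the empty set: F̄.obj X = F.obj X for every nonempty X and F̄.map g = F.map g for every function g between nonempty sets (equivalently, there is a natural transformation r : F ⟶ F̄ whose component at every nonempty set is the identity/an isomorphism). Concretely, F̄ may be defined on ∅ as the equalizer of F.map t and F.map f : F.obj PUnit → F.obj Bool, where t, f : PUnit → Bool pick the two elements. -/
open CategoryTheory

universe u

/-!
Every set functor preserves pullbacks of injections `f : X → Z`, `g : Y → Z` whose pullback `P`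
is nonempty. Take a retraction `t₁` of `Z` onto `range f`, and a map `t₂` fixing `range g` and
sending everything else to a point of `range f ∩ range g`. Then `t₂ ∘ t₁` factors through
`f ∘ p₁ : P → Z`, while `F t₁` fixes the image of `F f` and `F t₂` the image of `F g`; so an element
`F f a = F g b` comes from `F P`, and `F` of an injection with nonempty domain is split mono.

The hull `F̄ X` is the equalizer of `F (1 + X) ⇉ F (1 + 1 + X)`. For nonempty `X` the fork
`X → 1 + X ⇉ 1 + 1 + X` is split, so `F̄ X ≅ F X`. In general `F̄` only evaluates `F` at sets
`1 + X`, whose pullbacks `1 + P` are never empty.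
-/

/-- A set functor preserves finite intersections (formulated via pullbacks of pairs of
injective maps): `F.map` of every injection is injective, and `F` preserves the pullback of
any two injective maps into a common codomain, expressed by the `∃!` condition below. -/
def PreservesFiniteIntersectionsOfInjections (F : Type u ⥤ Type u) : Prop :=
  (∀ {X Y : Type u} (m : X → Y), Function.Injective m → Function.Injective (F.map (TypeCat.ofHom m))) ∧
  ∀ {X Y Z : Type u} (f : X → Z) (g : Y → Z),
    Function.Injective f → Function.Injective g →
      ∀ (a : F.obj X) (b : F.obj Y), F.map (TypeCat.ofHom f) a = F.map (TypeCat.ofHom g) b →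
        ∃! p : F.obj {q : X × Y // f q.1 = g q.2},
          F.map (TypeCat.ofHom (fun q : {q : X × Y // f q.1 = g q.2} => q.1.1)) p = a ∧
          F.map (TypeCat.ofHom (fun q : {q : X × Y // f q.1 = g q.2} => q.1.2)) p = b

open Function

theorem Function.Injective.exists_comp_eq_self_const_off_range {X Z : Type*} {f : X → Z}
    (hf : Injective f) (c : Z) : ∃ t : Z → Z, t ∘ f = f ∧ ∀ z ∉ Set.range f, t z = c :=
  ⟨extend f f fun _ => c, Function.extend_comp hf _ _, fun z hz => extend_apply' _ _ z hz⟩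

universe v

namespace CategoryTheory.Functor

variable (F : Type u ⥤ Type v)

lemma map_ofHom_map_ofHom {A B C : Type u} (τ : A → B) (σ : B → C) (x : F.obj A) :
    F.map (↾σ) (F.map (↾τ) x) = F.map (↾(σ ∘ τ)) x := by
  rw [← Functor.map_comp_apply]; rfl

lemma map_ofHom_id {A : Type u} (x : F.obj A) : F.map (↾(id : A → A)) x = x :=
  F.map_id_apply A x

lemma map_ofHom_injective {X Y : Type u} [Nonempty X] {m : X → Y} (hm : Function.Injective m) :
    Function.Injective (F.map (↾m)) := by
  refine LeftInverse.injective (g := F.map (↾(invFun m))) fun x => ?_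
  rw [map_ofHom_map_ofHom, (leftInverse_invFun hm).comp_eq_id, map_ofHom_id]

lemma existsUnique_map_eq_map_of_nonempty_pullback {X Y Z P : Type u} [Nonempty P]
    {f : X → Z} {g : Y → Z} {p₁ : P → X} {p₂ : P → Y}
    (hf : Function.Injective f) (hg : Function.Injective g) (hp₁ : Function.Injective p₁)
    (hcomm : f ∘ p₁ = g ∘ p₂) (hcover : ∀ x y, f x = g y → ∃ q, p₁ q = x)
    {a : F.obj X} {b : F.obj Y} (hab : F.map (↾f) a = F.map (↾g) b) :
    ∃! p : F.obj P, F.map (↾p₁) p = a ∧ F.map (↾p₂) p = b := by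
  obtain ⟨q₀⟩ := ‹Nonempty P›
  have : Nonempty X := ⟨p₁ q₀⟩
  have : Nonempty Y := ⟨p₂ q₀⟩
  obtain ⟨t₁, ht₁f, ht₁⟩ := hf.exists_comp_eq_self_const_off_range (f (p₁ q₀))
  obtain ⟨t₂, ht₂g, ht₂⟩ := hg.exists_comp_eq_self_const_off_range (g (p₂ q₀))
  have ht₁_mem : ∀ z, ∃ x, t₁ z = f x := by
    intro z
    by_cases hz : z ∈ Set.range f
    · obtain ⟨x, rfl⟩ := hz
      exact ⟨x, congrFun ht₁f x⟩
    · exact ⟨p₁ q₀, ht₁ z hz⟩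
  obtain ⟨r, hr⟩ : ∃ r : Z → P, t₂ ∘ t₁ = (f ∘ p₁) ∘ r := by
    refine Set.range_subset_range_iff_exists_comp.mp ?_
    rintro _ ⟨z, rfl⟩
    obtain ⟨x, hx⟩ := ht₁_mem z
    rw [Function.comp_apply, hx]
    by_cases hxy : f x ∈ Set.range g
    · obtain ⟨y, hy⟩ := hxy
      obtain ⟨q, rfl⟩ := hcover x y hy.symm
      exact ⟨q, (hy.symm.trans (congrFun ht₂g y).symm).trans (congrArg t₂ hy)⟩
    · exact ⟨q₀, (congrFun hcomm q₀).trans (ht₂ _ hxy).symm⟩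
  have hfix : F.map (↾(t₂ ∘ t₁)) (F.map (↾f) a) = F.map (↾f) a := by
    rw [← map_ofHom_map_ofHom, map_ofHom_map_ofHom F f t₁, ht₁f, hab,
      map_ofHom_map_ofHom, ht₂g]
  have ha : F.map (↾p₁) (F.map (↾r) (F.map (↾f) a)) = a := by
    refine F.map_ofHom_injective hf ?_
    rw [map_ofHom_map_ofHom, map_ofHom_map_ofHom, ← hr, hfix]
  refine ⟨F.map (↾r) (F.map (↾f) a), ⟨ha, F.map_ofHom_injective hg ?_⟩, fun p hp => ?_⟩
  · rw [map_ofHom_map_ofHom, ← hcomm, ← map_ofHom_map_ofHom, ha, hab]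
  · exact F.map_ofHom_injective hp₁ (hp.1.trans ha.symm)

/-- With `Option X` read as `1 + X`: for nonempty `X` these `a` are exactly the image of `F X`, and
for `X = ∅` this is the equalizer of the two maps `F 1 ⇉ F 2` induced by the points of `2`. -/
def IsTrnkovaHullElement (X : Type u) (a : F.obj (Option X)) : Prop :=
  F.map (↾(some : Option X → Option (Option X))) a = F.map (↾(Option.map some)) a

namespace IsTrnkovaHullElement

variable {F}

lemma map {X Y : Type u} {a : F.obj (Option X)} (ha : F.IsTrnkovaHullElement X a) (g : X → Y) :
    F.IsTrnkovaHullElement Y (F.map (↾(Option.map g)) a) := by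
  have h := congrArg (F.map (↾(Option.map (Option.map g)))) ha
  simp only [IsTrnkovaHullElement, map_ofHom_map_ofHom, Option.map_comp_map] at h ⊢
  exact h

lemma of_map {X Y : Type u} {a : F.obj (Option X)} {m : X → Y} (hm : Function.Injective m)
    (ha : F.IsTrnkovaHullElement Y (F.map (↾(Option.map m)) a)) :
    F.IsTrnkovaHullElement X a := by
  refine F.map_ofHom_injective (Option.map_injective (Option.map_injective hm)) ?_
  simp only [IsTrnkovaHullElement, map_ofHom_map_ofHom, Option.map_comp_map] at ha ⊢
  exact ha

lemma map_some (X : Type u) (a : F.obj X) : F.IsTrnkovaHullElement X (F.map (↾some) a) := by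
  simp only [IsTrnkovaHullElement, map_ofHom_map_ofHom]

lemma map_some_getD {X : Type u} {a : F.obj (Option X)} (ha : F.IsTrnkovaHullElement X a)
    (x : X) : F.map (↾(fun o : Option X => some (o.getD x))) a = a := by
  have h := congrArg (F.map (↾(Option.map fun o : Option X => o.getD x))) ha
  rw [map_ofHom_map_ofHom, map_ofHom_map_ofHom, Option.map_comp_map] at h
  refine h.trans ?_
  rw [show (fun o : Option X => o.getD x) ∘ some = id from rfl, Option.map_id, map_ofHom_id]

end IsTrnkovaHullElement

def trnkovaHull : Type u ⥤ Type v where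
  obj X := {a : F.obj (Option X) // F.IsTrnkovaHullElement X a}
  map g := ↾fun a => ⟨F.map (↾(Option.map g)) a.1, a.2.map g⟩
  map_id X := by
    ext a
    change F.map (↾(Option.map id)) a.1 = a.1
    rw [Option.map_id, map_ofHom_id]
  map_comp g h := by
    ext a
    change F.map (↾(Option.map (h ∘ g))) a.1 = F.map (↾(Option.map h)) (F.map (↾(Option.map g)) a.1)
    rw [map_ofHom_map_ofHom, Option.map_comp_map]

def toTrnkovaHull : F ⟶ F.trnkovaHull where
  app X := ↾fun a => ⟨F.map (↾some) a, IsTrnkovaHullElement.map_some X a⟩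
  naturality X Y g := by
    ext a
    apply Subtype.ext
    change F.map (↾some) (F.map (↾g) a) = F.map (↾(Option.map g)) (F.map (↾some) a)
    rw [map_ofHom_map_ofHom, map_ofHom_map_ofHom]

lemma trnkovaHull_map_injective {X Y : Type u} {m : X → Y} (hm : Function.Injective m) :
    Function.Injective (F.trnkovaHull.map (↾m)) := fun _ _ h =>
  Subtype.ext (F.map_ofHom_injective (Option.map_injective hm) (congrArg Subtype.val h))

lemma preservesFiniteIntersectionsOfInjections_trnkovaHull (F : Type u ⥤ Type u) :
    PreservesFiniteIntersectionsOfInjections F.trnkovaHull := by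
  refine ⟨fun m hm => F.trnkovaHull_map_injective hm, ?_⟩
  intro X Y Z f g hf hg a b hab
  have hfst : Function.Injective fun q : {q : X × Y // f q.1 = g q.2} => q.1.1 :=
    fun q q' h => Subtype.ext (Prod.ext h (hg (q.2.symm.trans ((congrArg f h).trans q'.2))))
  obtain ⟨p, ⟨hpa, hpb⟩, -⟩ := F.existsUnique_map_eq_map_of_nonempty_pullback
    (Option.map_injective hf) (Option.map_injective hg) (Option.map_injective hfst)
    (by rw [Option.map_comp_map, Option.map_comp_map]; congr 1; funext q; exact q.2)
    (fun
      | none, none, _ => ⟨none, rfl⟩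
      | some x, some y, h => ⟨some ⟨(x, y), Option.some.inj h⟩, rfl⟩)
    (congrArg Subtype.val hab)
  refine ⟨⟨p, IsTrnkovaHullElement.of_map hfst (hpa ▸ a.2)⟩, ⟨Subtype.ext hpa, Subtype.ext hpb⟩,
    fun p' hp' => F.trnkovaHull_map_injective hfst (hp'.1.trans (Subtype.ext hpa).symm)⟩

instance isIso_toTrnkovaHull_app (X : Type u) [Nonempty X] : IsIso (F.toTrnkovaHull.app X) := by
  obtain ⟨x⟩ := ‹Nonempty X›
  refine ⟨↾fun a => F.map (↾fun o : Option X => o.getD x) a.1, ?_, ?_⟩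
  · ext a
    exact (map_ofHom_map_ofHom ..).trans (map_ofHom_id ..)
  · ext a
    exact Subtype.ext ((map_ofHom_map_ofHom ..).trans (a.2.map_some_getD x))

end CategoryTheory.Functor

/-- **Trnková's hull:** for every set functor `F` there is a set functor `F̄` preserving
finite intersections together with a natural transformation `r : F ⟶ F̄` whose component at
every nonempty set is an isomorphism (so `F̄` agrees with `F` away from the empty set). -/
theorem exists_trnkova_hull (F : Type u ⥤ Type u) :
    ∃ (Fbar : Type u ⥤ Type u) (r : F ⟶ Fbar),
      PreservesFiniteIntersectionsOfInjections Fbar ∧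
        ∀ X : Type u, Nonempty X → IsIso (r.app X) :=
  ⟨F.trnkovaHull, F.toTrnkovaHull, F.preservesFiniteIntersectionsOfInjections_trnkovaHull,
    fun _ _ => inferInstance⟩
end

section
/- For a function f : X → PMF Y, the following are equivalent: (1) f is an isomorphism in the Kleisli category of the PMF monad, i.e., there exists g : Y → PMF X with (f x).bind g = PMF.pure x for all x : X and (g y).bind f = PMF.pure y for all y : Y; (2) there exists a bijection e : X ≃ Y with f x = PMF.pure (e x) for all x : X. Equivalently, f is a Kleisli isomorphism iff for every x there is a (unique) y with f x y = 1, and for every y : Y there is exactly one x : X with f x y > 0. -/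
universe u

private lemma pmf_eq_pure_of_support_subset {α : Type u} (p : PMF α) (a : α)
    (h : p.support ⊆ {a}) : p = PMF.pure a := by
  have ha : p a = 1 := by
    rw [PMF.apply_eq_one_iff]
    refine subset_antisymm h ?_
    rintro b rfl
    rcases p.support_nonempty with ⟨c, hc⟩
    have := h hc
    simp at this
    rwa [← this]
  ext b
  by_cases hb : b = a
  · subst hb; simp [ha]
  · have : b ∉ p.support := fun hmem => hb (h hmem)
    simp [PMF.mem_support_iff, not_not] at this
    simp [this, PMF.pure_apply, hb]

private lemma pmf_eq_pure_of_apply_eq_one {α : Type u} (p : PMF α) (a : α)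
    (h : p a = 1) : p = PMF.pure a :=
  pmf_eq_pure_of_support_subset p a (((PMF.apply_eq_one_iff p a).1 h).subset)

private lemma pmf_key {X Y : Type u} (f : X → PMF Y) (g : Y → PMF X)
    (h : ∀ x, (f x).bind g = PMF.pure x) :
    ∀ x y, y ∈ (f x).support → g y = PMF.pure x := by
  intro x y hy
  apply pmf_eq_pure_of_support_subset
  intro x' hx'
  have : x' ∈ ((f x).bind g).support := by
    rw [PMF.support_bind]
    exact Set.mem_iUnion₂.2 ⟨y, hy, hx'⟩
  rw [h x, PMF.support_pure] at this
  exact this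

private lemma pmf_iso_to_equiv {X Y : Type u} (f : X → PMF Y)
    (h : ∃ g : Y → PMF X,
        (∀ x, (f x).bind g = PMF.pure x) ∧ (∀ y, (g y).bind f = PMF.pure y)) :
    ∃ e : X ≃ Y, ∀ x, f x = PMF.pure (e x) := by
  obtain ⟨g, h1, h2⟩ := h
  have key1 := pmf_key f g h1
  have key2 := pmf_key g f h2
  set e : X → Y := fun x => ((f x).support_nonempty).choose with he
  set d : Y → X := fun y => ((g y).support_nonempty).choose with hd
  have hex : ∀ x, e x ∈ (f x).support := fun x => ((f x).support_nonempty).choose_spec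
  have hdy : ∀ y, d y ∈ (g y).support := fun y => ((g y).support_nonempty).choose_spec
  have hg : ∀ x, g (e x) = PMF.pure x := fun x => key1 x (e x) (hex x)
  have hf : ∀ y, f (d y) = PMF.pure y := fun y => key2 y (d y) (hdy y)
  have hfd : ∀ x, f x = PMF.pure (e x) := by
    intro x
    have : x ∈ (g (e x)).support := by rw [hg x]; simp
    exact key2 (e x) x this
  have left : ∀ x, d (e x) = x := by
    intro x
    have := hdy (e x)
    rw [hg x, PMF.support_pure] at this
    exact this
  have right : ∀ y, e (d y) = y := by
    intro y
    have := hex (d y)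
    rw [hf y, PMF.support_pure] at this
    exact this
  exact ⟨⟨e, d, left, right⟩, hfd⟩

/-- **Isomorphisms in the Kleisli category of the `PMF` monad.**  A function `f : X → PMF Y`
is a Kleisli isomorphism (has a Kleisli inverse `g`) iff it is the Dirac distribution along a
bijection `X ≃ Y`; equivalently, iff for every `x` there is some `y` with `f x y = 1` and for
every `y` there is exactly one `x` with `f x y > 0`. -/
theorem pmf_kleisli_isIso_iff {X Y : Type u} (f : X → PMF Y) :
    ((∃ g : Y → PMF X,
        (∀ x, (f x).bind g = PMF.pure x) ∧ (∀ y, (g y).bind f = PMF.pure y)) ↔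
      ∃ e : X ≃ Y, ∀ x, f x = PMF.pure (e x)) ∧
    ((∃ g : Y → PMF X,
        (∀ x, (f x).bind g = PMF.pure x) ∧ (∀ y, (g y).bind f = PMF.pure y)) ↔
      (∀ x, ∃ y, f x y = 1) ∧ ∀ y, ∃! x, 0 < f x y) := by
  have equiv_to_iso : (∃ e : X ≃ Y, ∀ x, f x = PMF.pure (e x)) →
      (∃ g : Y → PMF X,
        (∀ x, (f x).bind g = PMF.pure x) ∧ (∀ y, (g y).bind f = PMF.pure y)) := by
    rintro ⟨e, he⟩
    refine ⟨fun y => PMF.pure (e.symm y), fun x => ?_, fun y => ?_⟩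
    · rw [he x, PMF.pure_bind]; simp
    · rw [PMF.pure_bind, he (e.symm y)]; simp
  have first : (∃ g : Y → PMF X,
        (∀ x, (f x).bind g = PMF.pure x) ∧ (∀ y, (g y).bind f = PMF.pure y)) ↔
      ∃ e : X ≃ Y, ∀ x, f x = PMF.pure (e x) :=
    ⟨pmf_iso_to_equiv f, equiv_to_iso⟩
  refine ⟨first, first.trans ⟨?_, ?_⟩⟩
  · rintro ⟨e, he⟩
    constructor
    · intro x; exact ⟨e x, by rw [he x]; simp⟩
    · intro y
      refine ⟨e.symm y, ?_, ?_⟩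
      · show 0 < f (e.symm y) y
        rw [he (e.symm y)]; simp
      · intro x hx
        rw [he x, PMF.pure_apply] at hx
        by_contra hne
        have : e x ≠ y := fun h => hne (by rw [← h]; simp)
        simp [Ne.symm this] at hx
  · rintro ⟨h1, h2⟩
    let e : X → Y := fun x => (h1 x).choose
    have hf : ∀ x, f x = PMF.pure (e x) :=
      fun x => pmf_eq_pure_of_apply_eq_one _ _ (h1 x).choose_spec
    have hbij : Function.Bijective e := by
      constructor
      · intro x x' hxx'
        have hx : 0 < f x (e x) := by rw [hf x]; simp
        have hx' : 0 < f x' (e x) := by rw [hf x', ← hxx']; simp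
        exact (h2 (e x)).unique hx hx'
      · intro y
        obtain ⟨x, hx, -⟩ := h2 y
        refine ⟨x, ?_⟩
        rw [hf x, PMF.pure_apply] at hx
        by_contra hne
        simp [Ne.symm hne] at hx
    exact ⟨Equiv.ofBijective e hbij, hf⟩
end

section
/- Let C be a finitary extensive category, let h : A ⟶ B be a morphism and I an object of C. If the morphism coprod.map h (𝟙 I) : A ⨿ I ⟶ B ⨿ I is an isomorphism, then h is an isomorphism. (In particular, the functor (−) ⨿ I reflects isomorphisms.) -/
open CategoryTheory CategoryTheory.Limits

universe v u

/-! By extensivity, the coproduct `A ⨿ I`, mapped to `B ⨿ I` by `coprod.map h (𝟙 I)`, is the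
pullback of the coproduct decomposition of `B ⨿ I`: the square with sides `h`, the two left
injections and `coprod.map h (𝟙 I)` is a pullback. A pullback of an isomorphism is an
isomorphism. -/

theorem FinitaryExtensive.isPullback_inl_inl_coprodMap {C : Type u} [Category.{v} C]
    [FinitaryExtensive C] {X Y X' Y' : C} (f : X ⟶ X') (g : Y ⟶ Y') :
    IsPullback f coprod.inl coprod.inl (coprod.map f g) := by
  obtain ⟨hinl, -⟩ := ((BinaryCofan.isVanKampen_iff _).mp
    (FinitaryExtensive.vanKampen _ (coprodIsCoprod X' Y')) (BinaryCofan.mk coprod.inl coprod.inr)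
    f g (coprod.map f g) (coprod.inl_map f g).symm (coprod.inr_map f g).symm).mp
    ⟨coprodIsCoprod X Y⟩
  exact hinl.flip

/-- In a finitary extensive category, the functor `(−) ⨿ I` reflects isomorphisms: if
`coprod.map h (𝟙 I)` is an isomorphism, then so is `h`. -/
theorem isIso_of_isIso_coprod_map_id {C : Type u} [Category.{v} C] [FinitaryExtensive C]
    {A B I : C} (h : A ⟶ B) (hiso : IsIso (coprod.map h (𝟙 I))) : IsIso h :=
  (FinitaryExtensive.isPullback_inl_inl_coprodMap h (𝟙 I)).isIso_fst_of_isIso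
end
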